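/- Let 0 ≤ α < N, β > α − N, A > 1, κ ∈ ℝ, σ > N. If 0 ≤ f(x) ≤ c(A+|x|)^{-σ} log^{κ}(A+|x|) on ℝᴺ, then there exists C > 0 such that (K_{α,β} * f)(x) ≤ C (A+|x|)^{-α} log^{β}(A+|x|) for all x ∈ ℝᴺ. -/

import Mathlib

/-!
Put `R = A + ‖x‖`. Trading `log ^ κ` for a slightly smaller power gives
`f y ≤ C (A + ‖y‖) ^ (-s)` with `N < s`; split the integral at `‖x - y‖ = R / 2`.

Near `x`, `A + ‖y‖ ≥ R / 2`, so this part is at most `(R / 2) ^ (-s)` times the integral of the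
kernel over a ball of radius `R / 2`. There the kernel is at most a multiple of `‖z‖ ^ (-γ)` with
`γ < N`: `γ = α` if `β ≥ 0`, and `γ = α - β` if `β < 0`, by `log (1 + t) ≥ t / (1 + t)` (this is
where `β > α - N` enters). By scaling, the ball integral is a power of `R`, and the spare factor
`R ^ (N - s)` absorbs `log ^ β R`.

Away from `x`, the kernel is at most `C R ^ (-α) log ^ β R (A + ‖y‖) ^ δ` for every `δ > 0`:
`1 + ‖x - y‖ ≤ R (A + ‖y‖)` bounds the logarithm from above and `‖x - y‖ ≥ R / 2` from below.
Finally, `(A + ‖y‖) ^ (δ - s)` is integrable.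
-/

open MeasureTheory Real
open scoped ENNReal

noncomputable def lap {N : ℕ} (f : EuclideanSpace ℝ (Fin N) → ℝ) (x : EuclideanSpace ℝ (Fin N)) : ℝ :=
  ∑ i, iteratedFDeriv ℝ 2 f x ![EuclideanSpace.single i 1, EuclideanSpace.single i 1]

noncomputable def Kab {N : ℕ} (α β : ℝ) (x : EuclideanSpace ℝ (Fin N)) : ℝ :=
  ‖x‖ ^ (-α) * (Real.log (1 + ‖x‖)) ^ β

noncomputable def convK {N : ℕ} (α β : ℝ) (f : EuclideanSpace ℝ (Fin N) → ℝ)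
    (x : EuclideanSpace ℝ (Fin N)) : ℝ :=
  ∫ y, Kab α β (x - y) * f y

noncomputable def convKL {N : ℕ} (α β : ℝ) (f : EuclideanSpace ℝ (Fin N) → ℝ)
    (x : EuclideanSpace ℝ (Fin N)) : ℝ≥0∞ :=
  ∫⁻ y, ENNReal.ofReal (Kab α β (x - y) * f y)

open Metric Module

theorem log_rpow_le_mul_rpow {a : ℝ} (ha : 1 < a) (κ : ℝ) {ε : ℝ} (hε : 0 < ε) :
    ∃ C ≥ 0, ∀ t, a ≤ t → log t ^ κ ≤ C * t ^ ε := by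
  have hla : 0 < log a := log_pos ha
  rcases le_or_gt κ 0 with hκ | hκ
  · refine ⟨log a ^ κ, by positivity, fun t ht => ?_⟩
    calc log t ^ κ ≤ log a ^ κ := rpow_le_rpow_of_nonpos hla (log_le_log (by linarith) ht) hκ
      _ ≤ log a ^ κ * t ^ ε :=
          le_mul_of_one_le_right (by positivity) (one_le_rpow (by linarith) hε.le)
  · refine ⟨(κ / ε) ^ κ, rpow_nonneg (div_pos hκ hε).le _, fun t ht => ?_⟩
    have ht0 : 0 < t := by linarith
    calc log t ^ κ ≤ (t ^ (ε / κ) / (ε / κ)) ^ κ :=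
          rpow_le_rpow (log_nonneg (by linarith)) (log_le_rpow_div ht0.le (div_pos hε hκ)) hκ.le
      _ = (κ / ε) ^ κ * t ^ ε := by
          rw [div_eq_mul_inv, inv_div, mul_rpow (by positivity) (div_pos hκ hε).le,
            ← rpow_mul ht0.le, div_mul_cancel₀ _ hκ.ne', mul_comm]

theorem rpow_neg_le_mul_log_rpow {a : ℝ} (ha : 1 < a) (β : ℝ) {ε : ℝ} (hε : 0 < ε) :
    ∃ C ≥ 0, ∀ t, a ≤ t → t ^ (-ε) ≤ C * log t ^ β := by
  obtain ⟨C, hC, hlog⟩ := log_rpow_le_mul_rpow ha (-β) hε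
  refine ⟨C, hC, fun t ht => ?_⟩
  have hlt : 0 < log t := log_pos (by linarith)
  have := hlog t ht
  rw [rpow_neg hlt.le] at this
  rw [rpow_neg (by linarith), inv_le_iff_one_le_mul₀ (rpow_pos_of_pos (by linarith) _)]
  calc 1 = log t ^ β * (log t ^ β)⁻¹ := (mul_inv_cancel₀ (by positivity)).symm
    _ ≤ log t ^ β * (C * t ^ ε) := by gcongr
    _ = C * log t ^ β * t ^ ε := by ring

theorem rpow_neg_mul_log_rpow_le {A σ s : ℝ} (hA : 1 < A) (κ : ℝ) (hs : s < σ) :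
    ∃ C ≥ 0, ∀ t, A ≤ t → t ^ (-σ) * log t ^ κ ≤ C * t ^ (-s) := by
  obtain ⟨C, hC, hlog⟩ := log_rpow_le_mul_rpow hA κ (sub_pos.2 hs)
  refine ⟨C, hC, fun t ht => ?_⟩
  have ht0 : 0 < t := by linarith
  calc t ^ (-σ) * log t ^ κ ≤ t ^ (-σ) * (C * t ^ (σ - s)) := by gcongr; exact hlog t ht
    _ = C * t ^ (-s) := by rw [mul_left_comm, ← rpow_add ht0]; ring_nf

theorem log_mul_le_mul_log {a t u : ℝ} (ha : 1 < a) (ht : a ≤ t) (hu : 1 ≤ u) :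
    log (t * u) ≤ (1 + log u / log a) * log t := by
  have hla : 0 < log a := log_pos ha
  have hu' : log u ≤ log u / log a * log t := by
    rw [div_mul_eq_mul_div, le_div_iff₀ hla]
    exact mul_le_mul_of_nonneg_left (log_le_log (by linarith) ht) (log_nonneg hu)
  rw [log_mul (by linarith) (by linarith)]
  linarith

theorem rpow_mul_log_rpow_pos {R : ℝ} (hR : 1 < R) (a b : ℝ) : 0 < R ^ a * log R ^ b := by
  have := log_pos hR
  positivity

theorem log_one_add_norm_sub_le {E : Type*} [SeminormedAddCommGroup E] {A : ℝ} (hA : 1 < A)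
    (x y : E) : log (1 + ‖x - y‖) ≤ log (A + ‖x‖) * (2 / log A * log (A + ‖y‖)) := by
  have hlA : 0 < log A := log_pos hA
  set R := A + ‖x‖
  set S := A + ‖y‖
  have hR : A ≤ R := le_add_of_nonneg_right (norm_nonneg x)
  have hlS : log A ≤ log S := log_le_log (by linarith) (le_add_of_nonneg_right (norm_nonneg y))
  have hRS : 1 + ‖x - y‖ ≤ R * S := by
    have := norm_sub_le x y
    nlinarith [norm_nonneg x, norm_nonneg y, mul_nonneg (norm_nonneg x) (norm_nonneg y)]
  calc log (1 + ‖x - y‖) ≤ log (R * S) := log_le_log (by positivity) hRS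
    _ ≤ (1 + log S / log A) * log R := log_mul_le_mul_log hA hR (by linarith [norm_nonneg y])
    _ ≤ (2 / log A * log S) * log R := by
        gcongr
        · exact log_nonneg (by linarith)
        · rw [div_mul_eq_mul_div, le_div_iff₀ hlA, add_mul, one_mul, div_mul_cancel₀ _ hlA.ne']
          linarith
    _ = _ := mul_comm _ _

theorem half_log_le_log_one_add_norm_sub {E : Type*} [SeminormedAddCommGroup E] {A : ℝ}
    (hA : 1 < A) {x y : E} (hxy : (A + ‖x‖) / 2 ≤ ‖x - y‖) :
    log (A + ‖x‖) / 2 ≤ log (1 + ‖x - y‖) := by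
  set R := A + ‖x‖
  have hR : 1 < R := by linarith [norm_nonneg x]
  have hsq : log R ≤ 2 * log (1 + R / 2) := by
    rw [← log_rpow (by positivity)]
    exact log_le_log (by linarith) (by rw [rpow_two]; nlinarith)
  have := log_le_log (by positivity) (by linarith : 1 + R / 2 ≤ 1 + ‖x - y‖)
  linarith

theorem log_one_add_norm_sub_rpow_le {E : Type*} [SeminormedAddCommGroup E] {A : ℝ} (hA : 1 < A)
    (β : ℝ) {δ : ℝ} (hδ : 0 < δ) :
    ∃ C ≥ 0, ∀ x y : E, (A + ‖x‖) / 2 ≤ ‖x - y‖ →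
      log (1 + ‖x - y‖) ^ β ≤ C * log (A + ‖x‖) ^ β * (A + ‖y‖) ^ δ := by
  have hlA : 0 < log A := log_pos hA
  rcases le_or_gt 0 β with hβ0 | hβ0
  · obtain ⟨c, hc, hlog⟩ := log_rpow_le_mul_rpow hA β hδ
    refine ⟨(2 / log A) ^ β * c, by positivity, fun x y _ => ?_⟩
    have hS : A ≤ A + ‖y‖ := le_add_of_nonneg_right (norm_nonneg y)
    have hlR : 0 ≤ log (A + ‖x‖) := log_nonneg (by linarith [norm_nonneg x])
    have hlS : 0 ≤ log (A + ‖y‖) := log_nonneg (by linarith)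
    calc log (1 + ‖x - y‖) ^ β ≤ (log (A + ‖x‖) * (2 / log A * log (A + ‖y‖))) ^ β :=
          rpow_le_rpow (log_nonneg (by linarith [norm_nonneg (x - y)]))
            (log_one_add_norm_sub_le hA x y) hβ0
      _ = (2 / log A) ^ β * log (A + ‖x‖) ^ β * log (A + ‖y‖) ^ β := by
          rw [mul_rpow hlR (by positivity), mul_rpow (by positivity) hlS]; ring
      _ ≤ (2 / log A) ^ β * log (A + ‖x‖) ^ β * (c * (A + ‖y‖) ^ δ) := by
          gcongr; exact hlog _ hS
      _ = _ := by ring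
  · refine ⟨2 ^ (-β), by positivity, fun x y hxy => ?_⟩
    have hlR : 0 < log (A + ‖x‖) := log_pos (by linarith [norm_nonneg x])
    calc log (1 + ‖x - y‖) ^ β ≤ (log (A + ‖x‖) / 2) ^ β :=
          rpow_le_rpow_of_nonpos (by positivity) (half_log_le_log_one_add_norm_sub hA hxy) hβ0.le
      _ = 2 ^ (-β) * log (A + ‖x‖) ^ β * 1 := by
          rw [div_rpow hlR.le zero_le_two, rpow_neg zero_le_two]; ring
      _ ≤ _ := by gcongr; exact one_le_rpow (by linarith [norm_nonneg y]) hδ.le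

theorem integral_le_of_lintegral_ofReal_le {X : Type*} [MeasurableSpace X] {μ : Measure X}
    {f : X → ℝ} {b : ℝ} (hb : 0 ≤ b) (hf : 0 ≤ᵐ[μ] f)
    (h : ∫⁻ a, ENNReal.ofReal (f a) ∂μ ≤ ENNReal.ofReal b) : ∫ a, f a ∂μ ≤ b := by
  by_cases hi : Integrable f μ
  · rw [integral_eq_lintegral_of_nonneg_ae hf hi.aestronglyMeasurable]
    exact ENNReal.toReal_le_of_le_ofReal hb h
  · rw [integral_undef hi]
    exact hb

section HaarBall

variable {E : Type*} [NormedAddCommGroup E] [NormedSpace ℝ E] [FiniteDimensional ℝ E]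
  [MeasurableSpace E] [BorelSpace E] (μ : Measure E) [μ.IsAddHaarMeasure]

theorem setIntegral_ball_norm_rpow_neg (γ : ℝ) {r : ℝ} (hr : 0 < r) :
    ∫ z in ball 0 r, ‖z‖ ^ (-γ) ∂μ =
      r ^ (finrank ℝ E - γ) * ∫ z in ball 0 1, ‖z‖ ^ (-γ) ∂μ := by
  have h := μ.setIntegral_comp_smul_of_pos (fun z : E => ‖z‖ ^ (-γ)) (ball 0 1) hr
  simp only [smul_unitBall_of_pos hr, norm_smul, norm_of_nonneg hr.le,
    mul_rpow hr.le (norm_nonneg _), integral_const_mul, smul_eq_mul] at h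
  rw [eq_inv_mul_iff_mul_eq₀ (by positivity)] at h
  rw [← h, sub_eq_add_neg, rpow_add hr, rpow_natCast, mul_assoc]

theorem lintegral_ball_norm_rpow_neg (hd : 1 ≤ finrank ℝ E) {γ : ℝ} (hγ : γ < finrank ℝ E) {r : ℝ}
    (hr : 0 < r) :
    ∫⁻ z in ball 0 r, ENNReal.ofReal (‖z‖ ^ (-γ)) ∂μ =
      ENNReal.ofReal (r ^ (finrank ℝ E - γ) * ∫ z in ball 0 1, ‖z‖ ^ (-γ) ∂μ) := by
  rw [← setIntegral_ball_norm_rpow_neg μ γ hr, ofReal_integral_eq_lintegral_ofReal]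
  · refine integrableOn_ball_of_norm_le_rpow hd hγ (C := 1) (ae_of_all _ fun z => ?_)
      (measurable_norm.pow_const _).aestronglyMeasurable
    rw [one_mul, norm_of_nonneg (by positivity)]
  · exact ae_of_all _ fun z => by positivity

theorem lintegral_ball_le_of_le_mul_norm_rpow_neg (hd : 1 ≤ finrank ℝ E) {γ : ℝ}
    (hγ : γ < finrank ℝ E) {F : E → ℝ} {M r : ℝ} (hM : 0 ≤ M) (hr : 0 < r)
    (hF : ∀ z ∈ ball (0 : E) r, F z ≤ M * ‖z‖ ^ (-γ)) :
    ∫⁻ z in ball 0 r, ENNReal.ofReal (F z) ∂μ ≤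
      ENNReal.ofReal (M * (r ^ (finrank ℝ E - γ) * ∫ z in ball 0 1, ‖z‖ ^ (-γ) ∂μ)) := by
  calc ∫⁻ z in ball 0 r, ENNReal.ofReal (F z) ∂μ
      ≤ ∫⁻ z in ball 0 r, ENNReal.ofReal M * ENNReal.ofReal (‖z‖ ^ (-γ)) ∂μ :=
        setLIntegral_mono' measurableSet_ball fun z hz => by
          rw [← ENNReal.ofReal_mul hM]; exact ENNReal.ofReal_le_ofReal (hF z hz)
    _ = _ := by
        rw [lintegral_const_mul' _ _ ENNReal.ofReal_ne_top, lintegral_ball_norm_rpow_neg μ hd hγ hr,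
          ENNReal.ofReal_mul hM]

theorem setLIntegral_ball_comp_sub_left (F : E → ℝ≥0∞) (x : E) (r : ℝ) :
    ∫⁻ y in ball x r, F (x - y) ∂μ = ∫⁻ z in ball 0 r, F z ∂μ := by
  rw [← lintegral_indicator measurableSet_ball, ← lintegral_indicator measurableSet_ball,
    ← lintegral_sub_left_eq_self _ x]
  congr with y
  simp [Set.indicator, mem_ball, dist_eq_norm]

end HaarBall

section Kernel

variable {N : ℕ} {α β : ℝ}

theorem Kab_nonneg (z : EuclideanSpace ℝ (Fin N)) : 0 ≤ Kab α β z := by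
  have : 0 ≤ log (1 + ‖z‖) := log_nonneg (by linarith [norm_nonneg z])
  unfold Kab; positivity

theorem Kab_le_of_one_add_norm_le_of_nonneg (hβ : 0 ≤ β) {z : EuclideanSpace ℝ (Fin N)} {r : ℝ}
    (hz : 1 + ‖z‖ ≤ r) : Kab α β z ≤ log r ^ β * ‖z‖ ^ (-α) := by
  have := norm_nonneg z
  rw [Kab, mul_comm]
  gcongr
  exact log_nonneg (by linarith)

theorem Kab_le_of_one_add_norm_le_of_neg (hβ : β < 0) {z : EuclideanSpace ℝ (Fin N)} {r : ℝ}
    (hz : 1 + ‖z‖ ≤ r) : Kab α β z ≤ r ^ (-β) * ‖z‖ ^ (-(α - β)) := by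
  rcases eq_or_ne z 0 with rfl | hz0
  · simp only [Kab, norm_zero, add_zero, log_one, zero_rpow hβ.ne, mul_zero] at hz ⊢
    have : 0 < r := by linarith
    positivity
  have hn : 0 < ‖z‖ := norm_pos_iff.2 hz0
  have hr : 0 < r := by linarith
  have hlog : ‖z‖ / r ≤ log (1 + ‖z‖) :=
    calc ‖z‖ / r ≤ ‖z‖ / (1 + ‖z‖) := div_le_div_of_nonneg_left hn.le (by positivity) hz
      _ = 1 - (1 + ‖z‖)⁻¹ := by field_simp; ring
      _ ≤ log (1 + ‖z‖) := one_sub_inv_le_log_of_pos (by positivity)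
  calc Kab α β z ≤ ‖z‖ ^ (-α) * (‖z‖ / r) ^ β := by
        rw [Kab]
        exact mul_le_mul_of_nonneg_left (rpow_le_rpow_of_nonpos (by positivity) hlog hβ.le)
          (by positivity)
    _ = r ^ (-β) * ‖z‖ ^ (-(α - β)) := by
        rw [div_rpow hn.le hr.le, rpow_neg hr.le, show -(α - β) = -α + β by ring, rpow_add hn]
        ring

theorem Kab_le_of_half_le_norm_sub {A δ : ℝ} (hα0 : 0 ≤ α) (hA : 1 < A)
    (hδ : 0 < δ) :
    ∃ C ≥ 0, ∀ x y : EuclideanSpace ℝ (Fin N), (A + ‖x‖) / 2 ≤ ‖x - y‖ →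
      Kab α β (x - y) ≤ C * ((A + ‖x‖) ^ (-α) * log (A + ‖x‖) ^ β) * (A + ‖y‖) ^ δ := by
  obtain ⟨C, hC, hlog⟩ := log_one_add_norm_sub_rpow_le (E := EuclideanSpace ℝ (Fin N)) hA β hδ
  refine ⟨2 ^ α * C, by positivity, fun x y hxy => ?_⟩
  set R := A + ‖x‖
  have hR0 : 0 < R := by linarith [norm_nonneg x]
  have hnorm : ‖x - y‖ ^ (-α) ≤ 2 ^ α * R ^ (-α) :=
    calc ‖x - y‖ ^ (-α) ≤ (R / 2) ^ (-α) := rpow_le_rpow_of_nonpos (by positivity) hxy (by linarith)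
      _ = 2 ^ α * R ^ (-α) := by
          rw [div_rpow hR0.le zero_le_two, rpow_neg zero_le_two, div_inv_eq_mul]; ring
  calc Kab α β (x - y) ≤ (2 ^ α * R ^ (-α)) * (C * log R ^ β * (A + ‖y‖) ^ δ) :=
        mul_le_mul hnorm (hlog x y hxy)
          (rpow_nonneg (log_nonneg (by linarith [norm_nonneg (x - y)])) _) (by positivity)
    _ = _ := by ring

end Kernel

section Convolution

variable {N : ℕ} {α β A s : ℝ}

theorem setLIntegral_ball_Kab_le_of_nonneg (hN : 1 ≤ N) (hαN : α < N) (hβ : 0 ≤ β) (hA : 1 < A)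
    (hs : N ≤ s) :
    ∃ C ≥ 0, ∀ R, A ≤ R → ∫⁻ z in ball (0 : EuclideanSpace ℝ (Fin N)) (R / 2),
      ENNReal.ofReal (Kab α β z) ≤ ENNReal.ofReal (C * (R ^ (s - α) * log R ^ β)) := by
  set J := ∫ z in ball (0 : EuclideanSpace ℝ (Fin N)) 1, ‖z‖ ^ (-α)
  have hJ : 0 ≤ J := setIntegral_nonneg measurableSet_ball fun z _ => by positivity
  set cA := 1 + log 2 / log A
  have hcA : 0 ≤ cA := by have := log_pos hA; positivity
  refine ⟨cA ^ β * J, by positivity, fun R hR => ?_⟩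
  have hR1 : 1 < R := by linarith
  have hlogR : 0 ≤ log R := log_nonneg hR1.le
  calc _ ≤ ENNReal.ofReal ((cA * log R) ^ β * ((R / 2) ^ (N - α) * J)) := by
        refine (lintegral_ball_le_of_le_mul_norm_rpow_neg volume (by simpa using hN) (γ := α)
          (M := (cA * log R) ^ β) (by simpa using hαN) (by positivity) (by positivity)
          fun z hz => ?_).trans_eq (by rw [finrank_euclideanSpace_fin])
        rw [mem_ball_zero_iff] at hz
        calc Kab α β z ≤ log (R * 2) ^ β * ‖z‖ ^ (-α) :=
              Kab_le_of_one_add_norm_le_of_nonneg hβ (by linarith)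
          _ ≤ (cA * log R) ^ β * ‖z‖ ^ (-α) := by
              gcongr
              · exact log_nonneg (by linarith)
              · exact log_mul_le_mul_log hA hR one_le_two
    _ ≤ _ := by
        apply ENNReal.ofReal_le_ofReal
        have : (R / 2) ^ ((N : ℝ) - α) ≤ R ^ (s - α) :=
          calc (R / 2) ^ ((N : ℝ) - α) ≤ R ^ ((N : ℝ) - α) := by gcongr; linarith
            _ ≤ R ^ (s - α) := rpow_le_rpow_of_exponent_le hR1.le (by linarith)
        rw [mul_rpow hcA hlogR]
        calc _ = cA ^ β * J * ((R / 2) ^ ((N : ℝ) - α) * log R ^ β) := by ring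
          _ ≤ _ := by gcongr

theorem setLIntegral_ball_Kab_le_of_neg (hN : 1 ≤ N) (hβ : α - N < β) (hβ0 : β < 0) (hA : 1 < A)
    (hs : N < s) :
    ∃ C ≥ 0, ∀ R, A ≤ R → ∫⁻ z in ball (0 : EuclideanSpace ℝ (Fin N)) (R / 2),
      ENNReal.ofReal (Kab α β z) ≤ ENNReal.ofReal (C * (R ^ (s - α) * log R ^ β)) := by
  set J := ∫ z in ball (0 : EuclideanSpace ℝ (Fin N)) 1, ‖z‖ ^ (-(α - β))
  have hJ : 0 ≤ J := setIntegral_nonneg measurableSet_ball fun z _ => by positivity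
  obtain ⟨c, hc, hdecay⟩ := rpow_neg_le_mul_log_rpow hA β (sub_pos.2 hs)
  refine ⟨2 ^ (-β) * J * c, by positivity, fun R hR => ?_⟩
  have hR0 : 0 < R := by linarith
  calc _ ≤ ENNReal.ofReal ((R * 2) ^ (-β) * ((R / 2) ^ (N - (α - β)) * J)) := by
        refine (lintegral_ball_le_of_le_mul_norm_rpow_neg volume (by simpa using hN)
          (γ := α - β) (M := (R * 2) ^ (-β)) (by simp; linarith) (by positivity) (by positivity)
          fun z hz => ?_).trans_eq (by rw [finrank_euclideanSpace_fin])
        rw [mem_ball_zero_iff] at hz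
        exact Kab_le_of_one_add_norm_le_of_neg hβ0 (by linarith)
    _ ≤ _ := by
        apply ENNReal.ofReal_le_ofReal
        have hsplit : R ^ (-β) * R ^ ((N : ℝ) - (α - β)) = R ^ (s - α) * R ^ (-(s - N)) := by
          rw [← rpow_add hR0, ← rpow_add hR0]; ring_nf
        calc (R * 2) ^ (-β) * ((R / 2) ^ ((N : ℝ) - (α - β)) * J)
            = 2 ^ (-β) * J * (R ^ (-β) * (R / 2) ^ ((N : ℝ) - (α - β))) := by
              rw [mul_rpow hR0.le zero_le_two]; ring
          _ ≤ 2 ^ (-β) * J * (R ^ (-β) * R ^ ((N : ℝ) - (α - β))) := by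
              gcongr
              · linarith
              · linarith
          _ ≤ 2 ^ (-β) * J * (R ^ (s - α) * (c * log R ^ β)) := by
              rw [hsplit]; gcongr; exact hdecay R hR
          _ = _ := by ring

theorem setLIntegral_ball_Kab_le (hN : 1 ≤ N) (hαN : α < N) (hβ : α - N < β) (hA : 1 < A)
    (hs : N < s) :
    ∃ C ≥ 0, ∀ R, A ≤ R → ∫⁻ z in ball (0 : EuclideanSpace ℝ (Fin N)) (R / 2),
      ENNReal.ofReal (Kab α β z) ≤ ENNReal.ofReal (C * (R ^ (s - α) * log R ^ β)) := by
  rcases le_or_gt 0 β with hβ0 | hβ0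
  · exact setLIntegral_ball_Kab_le_of_nonneg hN hαN hβ0 hA hs.le
  · exact setLIntegral_ball_Kab_le_of_neg hN hβ hβ0 hA hs

theorem setLIntegral_ball_Kab_mul_rpow_le (hN : 1 ≤ N) (hαN : α < N) (hβ : α - N < β)
    (hA : 1 < A) (hs : N < s) :
    ∃ C ≥ 0, ∀ x : EuclideanSpace ℝ (Fin N),
      ∫⁻ y in ball x ((A + ‖x‖) / 2), ENNReal.ofReal (Kab α β (x - y) * (A + ‖y‖) ^ (-s)) ≤
        ENNReal.ofReal (C * ((A + ‖x‖) ^ (-α) * log (A + ‖x‖) ^ β)) := by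
  obtain ⟨C, hC, hball⟩ := setLIntegral_ball_Kab_le hN hαN hβ hA hs
  refine ⟨2 ^ s * C, by positivity, fun x => ?_⟩
  set R := A + ‖x‖
  have hR : A ≤ R := le_add_of_nonneg_right (norm_nonneg x)
  have hR0 : 0 < R := by linarith
  have hs0 : 0 ≤ s := by linarith [(Nat.cast_nonneg N : (0 : ℝ) ≤ N)]
  calc _ ≤ ∫⁻ y in ball x (R / 2),
        ENNReal.ofReal ((R / 2) ^ (-s)) * ENNReal.ofReal (Kab α β (x - y)) :=
        setLIntegral_mono' measurableSet_ball fun y hy => by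
          rw [mem_ball, dist_comm, dist_eq_norm] at hy
          have hxy := norm_sub_norm_le x y
          have hdecay : (A + ‖y‖) ^ (-s) ≤ (R / 2) ^ (-s) :=
            rpow_le_rpow_of_nonpos (by positivity) (by linarith) (by linarith)
          rw [← ENNReal.ofReal_mul (by positivity), mul_comm ((R / 2) ^ (-s))]
          exact ENNReal.ofReal_le_ofReal (mul_le_mul_of_nonneg_left hdecay (Kab_nonneg _))
    _ = ENNReal.ofReal ((R / 2) ^ (-s)) * ∫⁻ z in ball 0 (R / 2), ENNReal.ofReal (Kab α β z) := by
        rw [lintegral_const_mul' _ _ ENNReal.ofReal_ne_top,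
          setLIntegral_ball_comp_sub_left volume (fun z => ENNReal.ofReal (Kab α β z))]
    _ ≤ ENNReal.ofReal ((R / 2) ^ (-s)) * ENNReal.ofReal (C * (R ^ (s - α) * log R ^ β)) := by
        gcongr; exact hball R hR
    _ = _ := by
        rw [← ENNReal.ofReal_mul (by positivity)]
        congr 1
        rw [div_rpow hR0.le zero_le_two, rpow_neg zero_le_two, div_inv_eq_mul,
          show R ^ (-α) = R ^ (-s) * R ^ (s - α) by rw [← rpow_add hR0]; ring_nf]
        ring

theorem setLIntegral_compl_ball_Kab_mul_rpow_le (hα0 : 0 ≤ α) (hA : 1 < A) (hs : N < s) :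
    ∃ C ≥ 0, ∀ x : EuclideanSpace ℝ (Fin N),
      ∫⁻ y in (ball x ((A + ‖x‖) / 2))ᶜ, ENNReal.ofReal (Kab α β (x - y) * (A + ‖y‖) ^ (-s)) ≤
        ENNReal.ofReal (C * ((A + ‖x‖) ^ (-α) * log (A + ‖x‖) ^ β)) := by
  obtain ⟨δ, hδ, hNδ⟩ : ∃ δ : ℝ, 0 < δ ∧ N < s - δ := ⟨(s - N) / 2, by linarith, by linarith⟩
  obtain ⟨C, hC, hker⟩ := Kab_le_of_half_le_norm_sub (N := N) (β := β) hα0 hA hδ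
  set I := ∫⁻ y : EuclideanSpace ℝ (Fin N), ENNReal.ofReal ((1 + ‖y‖) ^ (-(s - δ)))
  have hI : I < ⊤ := finite_integral_one_add_norm (by rwa [finrank_euclideanSpace_fin])
  refine ⟨C * I.toReal, by positivity, fun x => ?_⟩
  have hW := (rpow_mul_log_rpow_pos (lt_add_of_lt_of_nonneg hA (norm_nonneg x)) (-α) β).le
  set W := (A + ‖x‖) ^ (-α) * log (A + ‖x‖) ^ β
  calc _ ≤ ∫⁻ y in (ball x ((A + ‖x‖) / 2))ᶜ,
        ENNReal.ofReal (C * W) * ENNReal.ofReal ((1 + ‖y‖) ^ (-(s - δ))) :=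
        setLIntegral_mono' measurableSet_ball.compl fun y hy => by
          rw [Set.mem_compl_iff, mem_ball, dist_comm, dist_eq_norm, not_lt] at hy
          have hS : 0 < A + ‖y‖ := by linarith [norm_nonneg y]
          rw [← ENNReal.ofReal_mul (by positivity)]
          refine ENNReal.ofReal_le_ofReal ?_
          calc Kab α β (x - y) * (A + ‖y‖) ^ (-s)
              ≤ C * W * (A + ‖y‖) ^ δ * (A + ‖y‖) ^ (-s) := by gcongr; exact hker x y hy
            _ = C * W * (A + ‖y‖) ^ (-(s - δ)) := by
                rw [mul_assoc, ← rpow_add hS]; ring_nf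
            _ ≤ _ := mul_le_mul_of_nonneg_left (rpow_le_rpow_of_nonpos (by positivity)
                (by linarith) (by linarith)) (by positivity)
    _ ≤ ∫⁻ y, ENNReal.ofReal (C * W) * ENNReal.ofReal ((1 + ‖y‖) ^ (-(s - δ))) :=
        setLIntegral_le_lintegral _ _
    _ = _ := by
        rw [lintegral_const_mul' _ _ ENNReal.ofReal_ne_top, mul_right_comm C,
          ENNReal.ofReal_mul (by positivity : 0 ≤ C * W), ENNReal.ofReal_toReal hI.ne]

theorem lintegral_Kab_mul_rpow_le (hN : 1 ≤ N) (hα0 : 0 ≤ α) (hαN : α < N) (hβ : α - N < β)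
    (hA : 1 < A) (hs : N < s) :
    ∃ C ≥ 0, ∀ x : EuclideanSpace ℝ (Fin N),
      ∫⁻ y, ENNReal.ofReal (Kab α β (x - y) * (A + ‖y‖) ^ (-s)) ≤
        ENNReal.ofReal (C * ((A + ‖x‖) ^ (-α) * log (A + ‖x‖) ^ β)) := by
  obtain ⟨C₁, hC₁, hnear⟩ := setLIntegral_ball_Kab_mul_rpow_le hN hαN hβ hA hs
  obtain ⟨C₂, hC₂, hfar⟩ := setLIntegral_compl_ball_Kab_mul_rpow_le (β := β) hα0 hA hs
  refine ⟨C₁ + C₂, by positivity, fun x => ?_⟩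
  have hW := (rpow_mul_log_rpow_pos (lt_add_of_lt_of_nonneg hA (norm_nonneg x)) (-α) β).le
  rw [← lintegral_add_compl _ measurableSet_ball, add_mul,
    ENNReal.ofReal_add (by positivity) (by positivity)]
  exact add_le_add (hnear x) (hfar x)

theorem convK_le_of_le_mul_rpow (hN : 1 ≤ N) (hα0 : 0 ≤ α) (hαN : α < N) (hβ : α - N < β)
    (hA : 1 < A) (hs : N < s) {f : EuclideanSpace ℝ (Fin N) → ℝ} (hf0 : ∀ y, 0 ≤ f y) {c : ℝ}
    (hc : 0 ≤ c) (hf : ∀ y, f y ≤ c * (A + ‖y‖) ^ (-s)) :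
    ∃ C ≥ 0, ∀ x : EuclideanSpace ℝ (Fin N),
      convK α β f x ≤ C * ((A + ‖x‖) ^ (-α) * log (A + ‖x‖) ^ β) := by
  obtain ⟨C, hC, hconv⟩ := lintegral_Kab_mul_rpow_le hN hα0 hαN hβ hA hs
  refine ⟨c * C, by positivity, fun x => ?_⟩
  have hW := (rpow_mul_log_rpow_pos (lt_add_of_lt_of_nonneg hA (norm_nonneg x)) (-α) β).le
  refine integral_le_of_lintegral_ofReal_le (by positivity)
    (ae_of_all _ fun y => mul_nonneg (Kab_nonneg _) (hf0 y)) ?_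
  calc _ ≤ ∫⁻ y, ENNReal.ofReal c * ENNReal.ofReal (Kab α β (x - y) * (A + ‖y‖) ^ (-s)) :=
        lintegral_mono fun y => by
          rw [← ENNReal.ofReal_mul hc, mul_left_comm]
          exact ENNReal.ofReal_le_ofReal (mul_le_mul_of_nonneg_left (hf y) (Kab_nonneg _))
    _ ≤ ENNReal.ofReal c * ENNReal.ofReal (C * ((A + ‖x‖) ^ (-α) * log (A + ‖x‖) ^ β)) := by
        rw [lintegral_const_mul' _ _ ENNReal.ofReal_ne_top]
        gcongr
        exact hconv x
    _ = _ := by rw [← ENNReal.ofReal_mul hc, mul_assoc]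

end Convolution

theorem stmt6_general (N : ℕ) (hN : 1 ≤ N) (α β σ κ c A : ℝ) (hα0 : 0 ≤ α) (hαN : α < N)
    (hβ : α - N < β) (hA : 1 < A) (hσ : (N : ℝ) < σ) (hc : 0 < c)
    (f : EuclideanSpace ℝ (Fin N) → ℝ) (hf0 : ∀ x, 0 ≤ f x)
    (hup : ∀ x : EuclideanSpace ℝ (Fin N),
      f x ≤ c * ((A + ‖x‖) ^ (-σ) * (Real.log (A + ‖x‖)) ^ κ)) :
    ∃ C > 0, ∀ x : EuclideanSpace ℝ (Fin N),
      convK α β f x ≤ C * ((A + ‖x‖) ^ (-α) * (Real.log (A + ‖x‖)) ^ β) := by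
  obtain ⟨s, hNs, hsσ⟩ := exists_between hσ
  obtain ⟨cκ, hcκ, hlog⟩ := rpow_neg_mul_log_rpow_le hA κ hsσ
  have hf : ∀ y, f y ≤ c * cκ * (A + ‖y‖) ^ (-s) := fun y =>
    (hup y).trans <| (mul_le_mul_of_nonneg_left
      (hlog _ (le_add_of_nonneg_right (norm_nonneg y))) hc.le).trans_eq (mul_assoc _ _ _).symm
  obtain ⟨C, hC, hconv⟩ :=
    convK_le_of_le_mul_rpow hN hα0 hαN hβ hA hNs hf0 (by positivity) hf
  refine ⟨C + 1, by positivity, fun x => (hconv x).trans ?_⟩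
  have hW := rpow_mul_log_rpow_pos (lt_add_of_lt_of_nonneg hA (norm_nonneg x)) (-α) β
  gcongr
  linarith

theorem stmt6 (N : ℕ) (hN : 1 ≤ N) (α β σ κ c A : ℝ) (hα0 : 0 ≤ α) (hαN : α < N)
    (hβ : α - N < β) (hA : 1 < A) (hσ : (N : ℝ) < σ) (hc : 0 < c)
    (f : EuclideanSpace ℝ (Fin N) → ℝ) (hfm : Measurable f) (hf0 : ∀ x, 0 ≤ f x)
    (hup : ∀ x : EuclideanSpace ℝ (Fin N),
      f x ≤ c * ((A + ‖x‖) ^ (-σ) * (Real.log (A + ‖x‖)) ^ κ)) :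
    ∃ C > 0, ∀ x : EuclideanSpace ℝ (Fin N),
      convK α β f x ≤ C * ((A + ‖x‖) ^ (-α) * (Real.log (A + ‖x‖)) ^ β) :=
  stmt6_general N hN α β σ κ c A hα0 hαN hβ hA hσ hc f hf0 hup
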